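/- Let G be a minimal counterexample (fewest vertices, then most edges) among planar graphs of maximum degree Δ with 9 ≤ Δ ≤ 10 and χ₂(G) > 2Δ + 7. Then G does not contain a vertex of degree 3 incident to one triangular face and two faces of degree 4. -/

import Mathlib

open SimpleGraph

/-- The square of a graph `G`: two distinct vertices are adjacent iff they are at
distance at most 2 in `G`. -/
def SimpleGraph.square {V : Type*} (G : SimpleGraph V) : SimpleGraph V where
  Adj u v := u ≠ v ∧ (G.Adj u v ∨ ∃ w, G.Adj u w ∧ G.Adj w v)
  symm := ⟨fun u v ⟨h1, h2⟩ => ⟨h1.symm, h2.elim (fun h => Or.inl h.symm)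
    (fun ⟨w, h3, h4⟩ => Or.inr ⟨w, h4.symm, h3.symm⟩)⟩⟩
  loopless := ⟨fun _ h => h.1 rfl⟩

/-- The 2-chromatic number of a graph: the chromatic number of its square. -/
noncomputable def chi2 {V : Type*} (G : SimpleGraph V) : ℕ∞ :=
  G.square.chromaticNumber

/-- The degree of a vertex, as a cardinality (instance-free). -/
noncomputable def degN {V : Type*} (G : SimpleGraph V) (v : V) : ℕ :=
  Nat.card {u // G.Adj v u}

/-- `G` has maximum degree `Δ`. -/
def maxDegIs {V : Type*} (G : SimpleGraph V) (Δ : ℕ) : Prop :=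
  (∀ v, degN G v ≤ Δ) ∧ ∃ v, degN G v = Δ

/-- A graph is planar if it has a drawing in the plane: an injective placement of the
vertices and, for each edge, a simple arc joining the endpoints, such that arcs avoid
all vertex points and the interiors of arcs of distinct edges are disjoint. -/
def IsPlanar {V : Type*} (G : SimpleGraph V) : Prop :=
  ∃ (pos : V → ℝ × ℝ) (arc : V → V → ℝ → ℝ × ℝ),
    Function.Injective pos ∧
    (∀ u v, G.Adj u v →
      Continuous (arc u v) ∧ arc u v 0 = pos u ∧ arc u v 1 = pos v ∧
      Set.InjOn (arc u v) (Set.Icc 0 1) ∧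
      ∀ w, pos w ∉ arc u v '' Set.Ioo 0 1) ∧
    ∀ u v x y, G.Adj u v → G.Adj x y → s(u, v) ≠ s(x, y) →
      Disjoint (arc u v '' Set.Ioo 0 1) (arc x y '' Set.Ioo 0 1)

/-- `G` is a minimal counterexample (fewest vertices, then most edges) among planar
graphs of maximum degree at most `Δ` to the bound `χ₂ ≤ 2Δ + 7`. -/
def MinimalCex (Δ : ℕ) {V : Type*} [Fintype V] (G : SimpleGraph V) : Prop :=
  IsPlanar G ∧ maxDegIs G Δ ∧ ((2 * Δ + 7 : ℕ) : ℕ∞) < chi2 G ∧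
  ∀ (n : ℕ) (H : SimpleGraph (Fin n)), IsPlanar H →
    (∀ v, degN H v ≤ Δ) →
    (n < Fintype.card V ∨
      (n = Fintype.card V ∧ Nat.card G.edgeSet < Nat.card H.edgeSet)) →
    chi2 H ≤ ((2 * Δ + 7 : ℕ) : ℕ∞)

section Comb

variable {V : Type*} [Fintype V] [DecidableEq V] (G : SimpleGraph V) [DecidableRel G.Adj]

/-- The involution exchanging the two darts of each edge. -/
def dartSymmPerm : Equiv.Perm G.Dart :=
  ⟨SimpleGraph.Dart.symm, SimpleGraph.Dart.symm,
    fun d => d.symm_symm, fun d => d.symm_symm⟩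

/-- A combinatorial plane embedding (rotation system) of `G`: a permutation of the darts
whose cycles are exactly the sets of darts sharing a tail vertex. -/
structure PlaneEmbedding where
  rot : Equiv.Perm G.Dart
  same_vertex : ∀ d d' : G.Dart, rot.SameCycle d d' ↔ d.toProd.1 = d'.toProd.1

variable {G}

/-- The face-tracing permutation of an embedding. -/
def PlaneEmbedding.facePerm (e : PlaneEmbedding G) : Equiv.Perm G.Dart :=
  e.rot * dartSymmPerm G

/-- Darts lying on the same face. -/
def PlaneEmbedding.faceSetoid (e : PlaneEmbedding G) : Setoid G.Dart :=
  ⟨e.facePerm.SameCycle,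
    ⟨fun _ => Equiv.Perm.SameCycle.refl _ _, fun h => h.symm, fun h h' => h.trans h'⟩⟩

/-- The faces of an embedding: orbits of the face-tracing permutation on darts. -/
def PlaneEmbedding.Faces (e : PlaneEmbedding G) : Type _ := Quotient e.faceSetoid

/-- The degree of a face: the number of darts on it (so cut-edges count twice). -/
noncomputable def PlaneEmbedding.faceDeg (e : PlaneEmbedding G) (f : e.Faces) : ℕ :=
  Nat.card {d : G.Dart // Quotient.mk e.faceSetoid d = f}

/-- A vertex is incident to a face if some dart of the face has it as tail. -/
def PlaneEmbedding.VertexOnFace (e : PlaneEmbedding G) (v : V) (f : e.Faces) : Prop :=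
  ∃ d : G.Dart, d.toProd.1 = v ∧ Quotient.mk e.faceSetoid d = f

/-- A vertex is triangulated if all its incident faces are triangles. -/
def PlaneEmbedding.Triangulated (e : PlaneEmbedding G) (v : V) : Prop :=
  ∀ f : e.Faces, e.VertexOnFace v f → e.faceDeg f = 3

noncomputable instance (e : PlaneEmbedding G) : Fintype e.Faces :=
  @Fintype.ofFinite _ (Quotient.finite _)

/-- The embedding is on the sphere: Euler's formula holds. -/
def PlaneEmbedding.IsSphere (e : PlaneEmbedding G) : Prop :=
  (Fintype.card V : ℤ) - G.edgeFinset.card + Nat.card e.Faces = 2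

end Comb

/-!
Delete the degree-3 vertex `v`. Walking around the triangle and the two 4-faces at `v` shows that
any two neighbours of `v` are adjacent or have a common neighbour other than `v`, so a square
colouring of `G - v`, which exists with `2Δ + 7` colours by minimality, is a partial square colouring
of `G`. If `a b c` are the neighbours of `v`, with `ab` the edge of the triangle, the vertices at
distance at most 2 from `v` lie in `N(a) ∪ N(b) ∪ N(c)` plus `c`; there `v` is counted three times and
the middle vertices of the two 4-faces twice each, so at most `3Δ - 4 < 2Δ + 7` colours are
forbidden at `v`.
-/

open Function

theorem Equiv.Perm.card_sameCycle {α : Type*} [Finite α] (σ : Equiv.Perm α) (x : α) :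
    Nat.card {y // σ.SameCycle x y} = minimalPeriod σ x := by
  classical
  have := Fintype.ofFinite α
  rw [show (σ : α → α) = (σ • ·) from rfl, MulAction.minimalPeriod_eq_card,
    ← Nat.card_eq_fintype_card]
  refine Nat.card_congr (Equiv.subtypeEquivRight fun y => ?_)
  rw [MulAction.mem_orbit_iff]
  constructor
  · rintro ⟨k, rfl⟩
    exact ⟨⟨σ ^ k, k, rfl⟩, rfl⟩
  · rintro ⟨⟨_, k, rfl⟩, rfl⟩
    exact ⟨k, rfl⟩

theorem Equiv.Perm.pow_apply_eq_inv_apply {α : Type*} {σ : Equiv.Perm α} {x : α} {n : ℕ}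
    (h : minimalPeriod σ x = n + 1) : (σ ^ n) x = σ⁻¹ x := by
  rw [Equiv.Perm.eq_inv_iff_eq, ← Equiv.Perm.mul_apply, ← pow_succ', ← h, Equiv.Perm.coe_pow,
    iterate_minimalPeriod]

theorem Equiv.Perm.pow_apply_ne_self_of_lt_minimalPeriod {α : Type*} (σ : Equiv.Perm α)
    {x : α} {n : ℕ} (hn : 0 < n) (hlt : n < minimalPeriod σ x) : (σ ^ n) x ≠ x := by
  intro h
  rw [Equiv.Perm.coe_pow] at h
  exact absurd (IsPeriodicPt.minimalPeriod_le hn h) (not_le.mpr hlt)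

theorem Equiv.Perm.SameCycle.eq_or_eq_or_eq_of_minimalPeriod_eq_three {α : Type*}
    {σ : Equiv.Perm α} {x y : α} (hxy : σ.SameCycle x y) (h3 : minimalPeriod σ x = 3) :
    y = x ∨ y = σ x ∨ y = σ⁻¹ x := by
  obtain ⟨n, rfl⟩ := hxy
  rw [← Equiv.Perm.smul_def, ← MulAction.zpow_smul_mod_minimalPeriod, Equiv.Perm.smul_def]
  rw [show minimalPeriod (σ • ·) x = 3 from h3, Nat.cast_ofNat]
  have hlo : 0 ≤ n % 3 := Int.emod_nonneg _ (by norm_num)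
  have hhi : n % 3 < 3 := Int.emod_lt_of_pos _ (by norm_num)
  generalize n % 3 = k at hlo hhi
  interval_cases k
  · simp
  · simp
  · exact .inr (.inr (Equiv.Perm.pow_apply_eq_inv_apply h3))

theorem Finset.card_union_add_four_le {α : Type*} [DecidableEq α] {A B C : Finset α}
    {v x y : α} (hvA : v ∈ A) (hvB : v ∈ B) (hvC : v ∈ C) (hxB : x ∈ B) (hxC : x ∈ C)
    (hyC : y ∈ C) (hyA : y ∈ A) (hxv : x ≠ v) (hyv : y ≠ v) :
    (A ∪ B ∪ C).card + 4 ≤ A.card + B.card + C.card := by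
  have hAB := Finset.card_union_add_card_inter A B
  have hABC := Finset.card_union_add_card_inter (A ∪ B) C
  by_cases hxy : x = y
  · subst hxy
    have h₁ : ({v, x} : Finset α).card ≤ (A ∩ B).card :=
      Finset.card_le_card (by simp [Finset.insert_subset_iff, *])
    have h₂ : ({v, x} : Finset α).card ≤ ((A ∪ B) ∩ C).card :=
      Finset.card_le_card (by simp [Finset.insert_subset_iff, *])
    rw [Finset.card_pair hxv.symm] at h₁ h₂
    omega
  · have h₁ : 0 < (A ∩ B).card := Finset.card_pos.mpr ⟨v, Finset.mem_inter.mpr ⟨hvA, hvB⟩⟩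
    have h₂ : ({v, x, y} : Finset α).card ≤ ((A ∪ B) ∩ C).card :=
      Finset.card_le_card (by simp [Finset.insert_subset_iff, *])
    rw [Finset.card_eq_three.mpr ⟨v, x, y, hxv.symm, hyv.symm, hxy, rfl⟩] at h₂
    omega

namespace SimpleGraph

variable {V W : Type*} {G : SimpleGraph V}

instance Dart.finite [Finite V] : Finite G.Dart :=
  Finite.of_injective _ Dart.toProd_injective

def Embedding.squareHom {G' : SimpleGraph W} (f : G ↪g G') : G.square →g G'.square where
  toFun := f
  map_rel' := by
    rintro u w ⟨hne, huw | ⟨z, huz, hzw⟩⟩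
    · exact ⟨f.injective.ne hne, .inl (f.map_rel_iff.mpr huw)⟩
    · exact ⟨f.injective.ne hne, .inr ⟨f z, f.map_rel_iff.mpr huz, f.map_rel_iff.mpr hzw⟩⟩

theorem square_adj_induce_compl {v : V}
    (h : ∀ a b, G.Adj v a → G.Adj v b → a ≠ b → G.Adj a b ∨ ∃ w ≠ v, G.Adj a w ∧ G.Adj w b)
    {p q : ({v}ᶜ : Set V)} (hpq : G.square.Adj p q) : (G.induce {v}ᶜ).square.Adj p q := by
  obtain ⟨hne, hadj | ⟨w, hpw, hwq⟩⟩ := hpq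
  · exact ⟨fun e => hne (congrArg _ e), .inl hadj⟩
  refine ⟨fun e => hne (congrArg _ e), ?_⟩
  by_cases hw : w = v
  · subst hw
    obtain hadj | ⟨w', hw', hpw', hw'q⟩ := h p q hpw.symm hwq hne
    · exact .inl hadj
    · exact .inr ⟨⟨w', hw'⟩, hpw', hw'q⟩
  · exact .inr ⟨⟨w, hw⟩, hpw, hwq⟩

theorem colorable_square_of_colorable_square_induce_compl {v : V} {k : ℕ}
    (hcol : (G.induce {v}ᶜ).square.Colorable k)
    (hsq : ∀ p q : ({v}ᶜ : Set V), G.square.Adj p q → (G.induce {v}ᶜ).square.Adj p q)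
    {S : Finset V} (hS : G.square.neighborSet v ⊆ S) (hk : S.card < k) :
    G.square.Colorable k := by
  classical
  obtain ⟨C⟩ := hcol
  set used := (S.subtype (· ∈ ({v}ᶜ : Set V))).image C
  obtain ⟨c, -, hc⟩ : ∃ c ∈ Finset.univ, c ∉ used := by
    refine Finset.exists_mem_notMem_of_card_lt_card ?_
    calc used.card ≤ (S.subtype (· ∈ ({v}ᶜ : Set V))).card := Finset.card_image_le
      _ ≤ S.card := (Finset.card_subtype _ _).trans_le (Finset.card_filter_le _ _)
      _ < Finset.univ.card := by rwa [Finset.card_univ, Fintype.card_fin]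
  have hused (w : V) (hw : w ≠ v) (hvw : G.square.Adj v w) : C ⟨w, hw⟩ ∈ used :=
    Finset.mem_image_of_mem C (Finset.mem_subtype.mpr (hS hvw))
  refine ⟨Coloring.mk (fun u => if hu : u = v then c else C ⟨u, hu⟩) ?_⟩
  intro u w huw
  by_cases hu : u = v <;> by_cases hw : w = v
  · exact absurd (hu.trans hw.symm) huw.ne
  · subst hu
    simp only [dif_pos, dif_neg hw]
    exact fun h => hc (h ▸ hused w hw huw)
  · subst hw
    simp only [dif_pos, dif_neg hu]
    exact fun h => hc (h ▸ hused u hu huw.symm)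
  · simp only [dif_neg hu, dif_neg hw]
    exact C.valid (hsq ⟨u, hu⟩ ⟨w, hw⟩ huw)

theorem square_neighborSet_subset [Fintype V] [DecidableEq V] [DecidableRel G.Adj]
    {v a b c : V} (hN : ∀ u, G.Adj v u → u = a ∨ u = b ∨ u = c) (hab : G.Adj a b) :
    G.square.neighborSet v ⊆
      ↑(insert c ((G.neighborFinset a ∪ G.neighborFinset b ∪ G.neighborFinset c).erase v)) := by
  rintro u ⟨huv, hvu | ⟨w, hvw, hwu⟩⟩
  · rcases hN u hvu with rfl | rfl | rfl <;> simp [huv.symm, hab, hab.symm]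
  · rcases hN w hvw with rfl | rfl | rfl <;> simp [huv.symm, hwu]

end SimpleGraph

theorem IsPlanar.comap {V W : Type*} {G : SimpleGraph V} {f : W → V} (hf : Injective f)
    (hG : IsPlanar G) : IsPlanar (G.comap f) := by
  obtain ⟨pos, arc, hpos, harc, hdisj⟩ := hG
  refine ⟨pos ∘ f, fun u w => arc (f u) (f w), hpos.comp hf, fun u w huw => ?_, ?_⟩
  · obtain ⟨h₁, h₂, h₃, h₄, h₅⟩ := harc _ _ huw
    exact ⟨h₁, h₂, h₃, h₄, fun z => h₅ (f z)⟩
  · intro u w p q huw hpq hne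
    refine hdisj _ _ _ _ huw hpq fun h => hne ?_
    rwa [← Sym2.map_mk, ← Sym2.map_mk, (Sym2.map.injective hf).eq_iff] at h

theorem degN_comap_le {V W : Type*} [Finite V] {G : SimpleGraph V} {f : W → V}
    (hf : Injective f) (w : W) : degN (G.comap f) w ≤ degN G (f w) :=
  Nat.card_le_card_of_injective (fun u => ⟨f u.1, u.2⟩) fun _ _ h =>
    Subtype.ext (hf (congrArg Subtype.val h))

theorem degN_eq_degree {V : Type*} (G : SimpleGraph V) (v : V) [Fintype (G.neighborSet v)] :
    degN G v = G.degree v := by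
  rw [← card_neighborSet_eq_degree, ← Nat.card_eq_fintype_card]
  rfl

namespace MinimalCex

variable {V : Type*} [Fintype V] {G : SimpleGraph V} {Δ : ℕ}

theorem colorable_square_comap (hG : MinimalCex Δ G) {W : Type*} [Fintype W] {f : W → V}
    (hf : Injective f) (hW : Fintype.card W < Fintype.card V) :
    (G.comap f).square.Colorable (2 * Δ + 7) := by
  let ε := Fintype.equivFin W
  have hfε : Injective (f ∘ ε.symm) := hf.comp ε.symm.injective
  have hH := hG.2.2.2 _ ((G.comap f).comap ε.symm) (hG.1.comap (f := f ∘ ε.symm) hfε)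
    (fun i => (degN_comap_le (G := G) hfε i).trans (hG.2.1.1 _)) (.inl hW)
  exact (chromaticNumber_le_iff_colorable.mp hH).of_hom
    (Iso.comap ε.symm (G.comap f)).symm.toEmbedding.squareHom

theorem colorable_square_induce_compl (hG : MinimalCex Δ G) (v : V) :
    (G.induce {v}ᶜ).square.Colorable (2 * Δ + 7) := by
  classical
  exact hG.colorable_square_comap Subtype.val_injective
    (Fintype.card_subtype_lt (p := (· ∈ ({v}ᶜ : Set V))) (x := v) (by simp))

theorem false_of_neighbors_edge_paths (hG : MinimalCex Δ G) (hΔ : Δ ≤ 10) {v a b c x y : V}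
    (hN : ∀ u, G.Adj v u → u = a ∨ u = b ∨ u = c) (hva : G.Adj v a) (hvb : G.Adj v b)
    (hvc : G.Adj v c) (hab : G.Adj a b) (hbx : G.Adj b x) (hxc : G.Adj x c) (hcy : G.Adj c y)
    (hya : G.Adj y a) (hxv : x ≠ v) (hyv : y ≠ v) : False := by
  classical
  have hclose : ∀ p q, G.Adj v p → G.Adj v q → p ≠ q →
      G.Adj p q ∨ ∃ w ≠ v, G.Adj p w ∧ G.Adj w q := by
    intro p q hp hq hpq
    rcases hN p hp with rfl | rfl | rfl <;> rcases hN q hq with rfl | rfl | rfl <;>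
      first
      | exact absurd rfl hpq
      | exact .inl hab
      | exact .inl hab.symm
      | exact .inr ⟨x, hxv, hbx, hxc⟩
      | exact .inr ⟨x, hxv, hxc.symm, hbx.symm⟩
      | exact .inr ⟨y, hyv, hcy, hya⟩
      | exact .inr ⟨y, hyv, hya.symm, hcy.symm⟩
  have hdeg (u : V) : (G.neighborFinset u).card ≤ Δ := by
    rw [card_neighborFinset_eq_degree, ← degN_eq_degree]
    exact hG.2.1.1 u
  have hU := Finset.card_union_add_four_le (A := G.neighborFinset a) (B := G.neighborFinset b)
    (C := G.neighborFinset c) (by simpa using hva.symm) (by simpa using hvb.symm)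
    (by simpa using hvc.symm) (by simpa using hbx) (by simpa using hxc.symm)
    (by simpa using hcy) (by simpa using hya.symm) hxv hyv
  set U := G.neighborFinset a ∪ G.neighborFinset b ∪ G.neighborFinset c
  have hS : (insert c (U.erase v)).card < 2 * Δ + 7 :=
    calc (insert c (U.erase v)).card ≤ (U.erase v).card + 1 := Finset.card_insert_le _ _
      _ = U.card := Finset.card_erase_add_one (by simp [U, hva.symm])
      _ < 2 * Δ + 7 := by have := hdeg a; have := hdeg b; have := hdeg c; omega
  have hcol := colorable_square_of_colorable_square_induce_compl
    (hG.colorable_square_induce_compl v) (fun _ _ => square_adj_induce_compl hclose)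
    (square_neighborSet_subset hN hab) hS
  exact hG.2.2.1.not_ge hcol.chromaticNumber_le

end MinimalCex

namespace PlaneEmbedding

variable {V : Type*} {G : SimpleGraph V} (e : PlaneEmbedding G)

def face (d : G.Dart) : e.Faces := Quotient.mk e.faceSetoid d

theorem face_facePerm_pow (d : G.Dart) (n : ℕ) : e.face ((e.facePerm ^ n) d) = e.face d :=
  (Quotient.sound (show e.facePerm.SameCycle d ((e.facePerm ^ n) d) from
    ⟨n, by rw [zpow_natCast]⟩)).symm

theorem fst_rot (d : G.Dart) : (e.rot d).fst = d.fst :=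
  ((e.same_vertex _ _).mp ⟨1, by rw [zpow_one]⟩).symm

theorem fst_rot_inv (d : G.Dart) : (e.rot⁻¹ d).fst = d.fst :=
  ((e.same_vertex _ _).mp ⟨-1, by rw [zpow_neg_one]⟩).symm

theorem fst_facePerm (d : G.Dart) : (e.facePerm d).fst = d.snd :=
  e.fst_rot d.symm

theorem facePerm_inv_apply (d : G.Dart) : e.facePerm⁻¹ d = (e.rot⁻¹ d).symm := by
  rw [Equiv.Perm.inv_eq_iff_eq]
  simp [facePerm, dartSymmPerm]

theorem adj_fst_facePerm_pow (d : G.Dart) (n : ℕ) :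
    G.Adj ((e.facePerm ^ n) d).fst ((e.facePerm ^ (n + 1)) d).fst := by
  rw [pow_succ', Equiv.Perm.mul_apply, fst_facePerm]
  exact ((e.facePerm ^ n) d).adj

theorem fst_facePerm_pow_eq_snd_rot_inv {d : G.Dart} {n : ℕ}
    (h : minimalPeriod e.facePerm d = n + 1) :
    ((e.facePerm ^ n) d).fst = (e.rot⁻¹ d).snd := by
  rw [Equiv.Perm.pow_apply_eq_inv_apply h, facePerm_inv_apply]
  rfl

variable [Finite V]

theorem faceDeg_face (d : G.Dart) : e.faceDeg (e.face d) = minimalPeriod e.facePerm d := by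
  rw [← Equiv.Perm.card_sameCycle]
  exact Nat.card_congr (Equiv.subtypeEquivRight fun _ => Quotient.eq.trans ⟨.symm, .symm⟩)

theorem minimalPeriod_rot (d : G.Dart) : minimalPeriod e.rot d = degN G d.fst := by
  rw [← Equiv.Perm.card_sameCycle]
  refine Nat.card_congr
    { toFun d' := ⟨d'.1.snd, (e.same_vertex d d'.1).mp d'.2 ▸ d'.1.adj⟩
      invFun u := ⟨⟨(d.fst, u.1), u.2⟩, (e.same_vertex _ _).mpr rfl⟩
      left_inv := fun ⟨⟨⟨_, _⟩, _⟩, h⟩ => by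
        obtain rfl : d.fst = _ := (e.same_vertex _ _).mp h
        rfl
      right_inv := fun _ => rfl }

theorem eq_or_eq_rot_or_eq_rot_inv {d d' : G.Dart} (hdeg : degN G d.fst = 3)
    (h : d'.fst = d.fst) : d' = d ∨ d' = e.rot d ∨ d' = e.rot⁻¹ d :=
  ((e.same_vertex d d').mpr h.symm).eq_or_eq_or_eq_of_minimalPeriod_eq_three
    ((e.minimalPeriod_rot d).trans hdeg)

theorem adj_snd_of_faceDeg_eq_three {d : G.Dart} (h : e.faceDeg (e.face d) = 3) :
    G.Adj d.snd (e.rot⁻¹ d).snd := by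
  rw [faceDeg_face] at h
  have hadj := e.adj_fst_facePerm_pow d 1
  rwa [pow_one, fst_facePerm, e.fst_facePerm_pow_eq_snd_rot_inv h] at hadj

theorem exists_adj_of_faceDeg_eq_four {d : G.Dart} (h : e.faceDeg (e.face d) = 4)
    (hsep : ∀ d', d'.fst = d.fst → e.face d' = e.face d → d' = d) :
    ∃ x ≠ d.fst, G.Adj d.snd x ∧ G.Adj x (e.rot⁻¹ d).snd := by
  rw [faceDeg_face] at h
  refine ⟨((e.facePerm ^ 2) d).fst, fun hx => ?_, ?_, ?_⟩
  · exact e.facePerm.pow_apply_ne_self_of_lt_minimalPeriod two_pos (by omega)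
      (hsep _ hx (e.face_facePerm_pow d 2))
  · have hadj := e.adj_fst_facePerm_pow d 1
    rwa [pow_one, fst_facePerm] at hadj
  · have hadj := e.adj_fst_facePerm_pow d 2
    rwa [e.fst_facePerm_pow_eq_snd_rot_inv h] at hadj

end PlaneEmbedding

theorem PlaneEmbedding.false_of_faceDeg_three_four_four {V : Type*} [Fintype V] {G : SimpleGraph V}
    (e : PlaneEmbedding G) {Δ : ℕ} (hG : MinimalCex Δ G) (hΔ : Δ ≤ 10) (d : G.Dart)
    (hdeg : degN G d.fst = 3) (h₁₂ : e.face d ≠ e.face (e.rot d))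
    (h₁₃ : e.face d ≠ e.face (e.rot⁻¹ d)) (h₂₃ : e.face (e.rot d) ≠ e.face (e.rot⁻¹ d))
    (hD₁ : e.faceDeg (e.face d) = 3) (hD₂ : e.faceDeg (e.face (e.rot d)) = 4)
    (hD₃ : e.faceDeg (e.face (e.rot⁻¹ d)) = 4) : False := by
  have hat (d' : G.Dart) := e.eq_or_eq_rot_or_eq_rot_inv (d' := d') hdeg
  obtain ⟨x, hxv, hbx, hxc⟩ := e.exists_adj_of_faceDeg_eq_four hD₃ fun d' hd' hf => by
    rcases hat d' (hd'.trans (e.fst_rot_inv d)) with h | h | h <;> rw [h] at hf ⊢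
    exacts [absurd hf h₁₃, absurd hf h₂₃]
  obtain ⟨y, hyv, hcy, hya⟩ := e.exists_adj_of_faceDeg_eq_four hD₂ fun d' hd' hf => by
    rcases hat d' (hd'.trans (e.fst_rot d)) with h | h | h <;> rw [h] at hf ⊢
    exacts [absurd hf h₁₂, absurd hf.symm h₂₃]
  have hinv : e.rot⁻¹ (e.rot⁻¹ d) = e.rot d := by
    rw [← Equiv.Perm.pow_apply_eq_inv_apply ((e.minimalPeriod_rot d).trans hdeg)]
    simp [pow_two]
  rw [hinv] at hxc
  rw [show e.rot⁻¹ (e.rot d) = d from e.rot.symm_apply_apply d] at hya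
  rw [fst_rot_inv] at hxv
  rw [fst_rot] at hyv
  refine hG.false_of_neighbors_edge_paths hΔ (fun u hu => ?_) d.adj
    (e.fst_rot_inv d ▸ (e.rot⁻¹ d).adj) (e.fst_rot d ▸ (e.rot d).adj)
    (e.adj_snd_of_faceDeg_eq_three hD₁) hbx hxc hcy hya hxv hyv
  rcases hat ⟨(d.fst, u), hu⟩ rfl with h | h | h
  exacts [.inl (congrArg (·.snd) h), .inr (.inr (congrArg (·.snd) h)),
    .inr (.inl (congrArg (·.snd) h))]

theorem stmt14_general {V : Type*} [Fintype V] (G : SimpleGraph V)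
    (Δ : ℕ) (hΔ : Δ = 9 ∨ Δ = 10) (hmin : MinimalCex Δ G)
    (e : PlaneEmbedding G) :
    ¬ ∃ (v : V) (f₁ f₂ f₃ : e.Faces), degN G v = 3 ∧
      f₁ ≠ f₂ ∧ f₁ ≠ f₃ ∧ f₂ ≠ f₃ ∧
      e.VertexOnFace v f₁ ∧ e.VertexOnFace v f₂ ∧ e.VertexOnFace v f₃ ∧
      e.faceDeg f₁ = 3 ∧ e.faceDeg f₂ = 4 ∧ e.faceDeg f₃ = 4 := by
  rintro ⟨v, f₁, f₂, f₃, hdeg, h₁₂, h₁₃, h₂₃, ⟨d, rfl, rfl⟩, ⟨d₂, hd₂, rfl⟩, ⟨d₃, hd₃, rfl⟩,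
    hD₁, hD₂, hD₃⟩
  have hat (d' : G.Dart) (h : d'.fst = d.fst) (hne : e.face d ≠ e.face d') :
      d' = e.rot d ∨ d' = e.rot⁻¹ d :=
    (e.eq_or_eq_rot_or_eq_rot_inv hdeg h).resolve_left (by rintro rfl; exact hne rfl)
  have hΔ' : Δ ≤ 10 := by omega
  rcases hat d₂ hd₂ h₁₂ with rfl | rfl <;> rcases hat d₃ hd₃ h₁₃ with rfl | rfl
  · exact h₂₃ rfl
  · exact e.false_of_faceDeg_three_four_four hmin hΔ' d hdeg h₁₂ h₁₃ h₂₃ hD₁ hD₂ hD₃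
  · exact e.false_of_faceDeg_three_four_four hmin hΔ' d hdeg h₁₃ h₁₂ h₂₃.symm hD₁ hD₃ hD₂
  · exact h₂₃ rfl

/-- For `Δ ∈ {9, 10}`, a minimal counterexample does not contain a vertex of degree 3
incident to one triangular face and two faces of degree 4. -/
theorem stmt14 {V : Type*} [Fintype V] [DecidableEq V] (G : SimpleGraph V)
    [DecidableRel G.Adj] (Δ : ℕ) (hΔ : Δ = 9 ∨ Δ = 10) (hmin : MinimalCex Δ G)
    (e : PlaneEmbedding G) (hsphere : e.IsSphere) :
    ¬ ∃ (v : V) (f₁ f₂ f₃ : e.Faces), degN G v = 3 ∧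
      f₁ ≠ f₂ ∧ f₁ ≠ f₃ ∧ f₂ ≠ f₃ ∧
      e.VertexOnFace v f₁ ∧ e.VertexOnFace v f₂ ∧ e.VertexOnFace v f₃ ∧
      e.faceDeg f₁ = 3 ∧ e.faceDeg f₂ = 4 ∧ e.faceDeg f₃ = 4 :=
  stmt14_general G Δ hΔ hmin e
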